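/- arXiv:2405.05290 — 2 statements merged into one kernel-verified Lean document; each statement's English description precedes it below -/
import Mathlib

section
/- Let A and B be positive invertible operators with sA ≤ B ≤ tA for scalars 0 < s ≤ t, and let α, β ∈ [0,1]. Then A ♯_β B ≤ μ (A !_α B), where μ = max{(1-α)t^β + α t^{-(1-β)}, (1-α)s^β + α s^{-(1-β)}}. -/
open scoped ComplexOrder

/-- `A ^ r` for a Hermitian matrix, via the continuous functional calculus. -/
noncomputable def mpow {n : ℕ} (A : Matrix (Fin n) (Fin n) ℂ) (r : ℝ) : Matrix (Fin n) (Fin n) ℂ :=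
  cfc (fun x : ℝ => x ^ r) A

/-- The β-weighted operator geometric mean `A ♯_β B = A^{1/2}(A^{-1/2} B A^{-1/2})^β A^{1/2}`. -/
noncomputable def geomMean {n : ℕ} (A B : Matrix (Fin n) (Fin n) ℂ) (β : ℝ) :
    Matrix (Fin n) (Fin n) ℂ :=
  mpow A (1/2) * mpow (mpow A (-(1/2)) * B * mpow A (-(1/2))) β * mpow A (1/2)

/-- The α-weighted operator harmonic mean `A !_α B = ((1-α)A⁻¹ + αB⁻¹)⁻¹`. -/
noncomputable def harmMean {n : ℕ} (A B : Matrix (Fin n) (Fin n) ℂ) (α : ℝ) :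
    Matrix (Fin n) (Fin n) ℂ :=
  ((1 - α) • A⁻¹ + α • B⁻¹)⁻¹

/-!
Conjugating by `A^{-1/2}` reduces everything to `C = A^{-1/2} B A^{-1/2}`, whose spectrum lies
in `[s, t]`: then `A ♯_β B = A^{1/2} C^β A^{1/2}` and
`A !_α B = A^{1/2} ((1-α) + α C⁻¹)⁻¹ A^{1/2}`, so the claim becomes the scalar inequality
`(1-α) x^β + α x^{β-1} ≤ μ` for `x ∈ [s, t]`. Its left side is a convex function of `log x`,
hence bounded by its values at the endpoints.
-/

open Set
open scoped Matrix MatrixOrder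

theorem add_mul_rpow_le_max_of_mem_Icc {p q β γ s t x : ℝ} (hp : 0 ≤ p) (hq : 0 ≤ q)
    (hs : 0 < s) (hx : x ∈ Icc s t) :
    p * x ^ β + q * x ^ γ ≤ max (p * s ^ β + q * s ^ γ) (p * t ^ β + q * t ^ γ) := by
  obtain ⟨hsx, hxt⟩ := hx
  have hx0 : 0 < x := hs.trans_le hsx
  let g : ℝ → ℝ := fun u => p * Real.exp (β * u) + q * Real.exp (γ * u)
  have hg : ConvexOn ℝ univ g :=
    ((convexOn_exp.comp_linearMap (LinearMap.lsmul ℝ ℝ β)).smul hp).add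
      ((convexOn_exp.comp_linearMap (LinearMap.lsmul ℝ ℝ γ)).smul hq)
  have hg_log : ∀ y, 0 < y → g (Real.log y) = p * y ^ β + q * y ^ γ := fun y hy => by
    simp only [g, Real.rpow_def_of_pos hy, mul_comm]
  have hlog : Real.log x ∈ segment ℝ (Real.log s) (Real.log t) := by
    rw [segment_eq_Icc (Real.log_le_log hs (hsx.trans hxt))]
    exact ⟨Real.log_le_log hs hsx, Real.log_le_log hx0 hxt⟩
  have := hg.le_on_segment (mem_univ _) (mem_univ _) hlog
  rwa [hg_log x hx0, hg_log s hs, hg_log t (hx0.trans_le hxt)] at this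

lemma one_sub_add_mul_inv_pos {x α : ℝ} (hx : 0 < x) (hα0 : 0 ≤ α) (hα1 : α ≤ 1) :
    0 < (1 - α) + α * x⁻¹ := by
  rcases hα1.lt_or_eq with h | rfl
  · have : 0 ≤ α * x⁻¹ := by positivity
    linarith
  · simpa using hx

theorem rpow_le_mul_inv_of_mem_Icc {s t x α β : ℝ} (hs : 0 < s) (hx : x ∈ Icc s t)
    (hα0 : 0 ≤ α) (hα1 : α ≤ 1) :
    x ^ β ≤ max ((1 - α) * t ^ β + α * t ^ (-(1 - β))) ((1 - α) * s ^ β + α * s ^ (-(1 - β)))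
      * ((1 - α) + α * x⁻¹)⁻¹ := by
  have hx0 : 0 < x := hs.trans_le hx.1
  rw [← div_eq_mul_inv, le_div_iff₀ (one_sub_add_mul_inv_pos hx0 hα0 hα1), neg_sub, max_comm]
  calc x ^ β * ((1 - α) + α * x⁻¹) = (1 - α) * x ^ β + α * x ^ (β - 1) := by
        rw [Real.rpow_sub_one hx0.ne']; ring
    _ ≤ _ := add_mul_rpow_le_max_of_mem_Icc (by linarith) hα0 hs hx

theorem spectrum_conj_subset_Icc {R : Type*} [Ring R] [StarRing R] [PartialOrder R]
    [StarOrderedRing R] [TopologicalSpace R] [Algebra ℝ R]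
    [ContinuousFunctionalCalculus ℝ R IsSelfAdjoint] [NonnegSpectrumClass ℝ R]
    {a b c : R} {s t : ℝ} (hc : IsSelfAdjoint c) (hcac : c * a * c = 1) (hb : IsSelfAdjoint b)
    (hsb : s • a ≤ b) (hbt : b ≤ t • a) :
    spectrum ℝ (c * b * c) ⊆ Icc s t := by
  have hcbc : IsSelfAdjoint (c * b * c) := by simpa [hc.star_eq] using hb.conjugate' c
  have hscalar : ∀ r : ℝ, c * (r • a) * c = algebraMap ℝ R r := fun r => by
    rw [mul_smul_comm, smul_mul_assoc, hcac, Algebra.algebraMap_eq_smul_one]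
  intro x hx
  exact ⟨(algebraMap_le_iff_le_spectrum hcbc).1 (hscalar s ▸ hc.conjugate_le_conjugate hsb) x hx,
    (le_algebraMap_iff_spectrum_le hcbc).1 (hscalar t ▸ hc.conjugate_le_conjugate hbt) x hx⟩

lemma Matrix.continuousOn_spectrum_real {m 𝕜 : Type*} [Fintype m] [DecidableEq m] [RCLike 𝕜]
    (M : Matrix m m 𝕜) (f : ℝ → ℝ) : ContinuousOn f (spectrum ℝ M) :=
  M.finite_real_spectrum.continuousOn f

section mpow

variable {n : ℕ} {A : Matrix (Fin n) (Fin n) ℂ}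

lemma isHermitian_mpow (A : Matrix (Fin n) (Fin n) ℂ) (r : ℝ) : (mpow A r).IsHermitian :=
  cfc_predicate _ A

lemma mpow_zero (hA : A.IsHermitian) : mpow A 0 = 1 := by
  simp only [mpow, Real.rpow_zero]
  exact cfc_const_one ℝ A hA

lemma mpow_one (hA : A.IsHermitian) : mpow A 1 = A := by
  simp only [mpow, Real.rpow_one]
  exact cfc_id' ℝ A hA

lemma mpow_add (hA : A.PosDef) (r r' : ℝ) : mpow A (r + r') = mpow A r * mpow A r' := by
  rw [mpow, mpow, mpow, ← cfc_mul _ _ A (A.continuousOn_spectrum_real _)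
    (A.continuousOn_spectrum_real _)]
  exact cfc_congr fun x hx => Real.rpow_add (hA.isStrictlyPositive.spectrum_pos hx) r r'

lemma mpow_neg_half_mul_mul_mpow_neg_half (hA : A.PosDef) :
    mpow A (-(1 / 2)) * A * mpow A (-(1 / 2)) = 1 := by
  calc mpow A (-(1 / 2)) * A * mpow A (-(1 / 2))
      = mpow A (-(1 / 2)) * mpow A 1 * mpow A (-(1 / 2)) := by rw [mpow_one hA.isHermitian]
    _ = mpow A 0 := by rw [← mpow_add hA, ← mpow_add hA]; norm_num
    _ = 1 := mpow_zero hA.isHermitian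

end mpow

section harmMean

variable {n : ℕ}

lemma harmMean_conjTranspose_mul_mul {a : Matrix (Fin n) (Fin n) ℂ} (ha : IsUnit a.det)
    (A B : Matrix (Fin n) (Fin n) ℂ) (α : ℝ) :
    harmMean (aᴴ * A * a) (aᴴ * B * a) α = aᴴ * harmMean A B α * a := by
  have haH : IsUnit aᴴ.det := by simpa [Matrix.det_conjTranspose] using ha.star
  have hsum : (1 - α) • (aᴴ * A * a)⁻¹ + α • (aᴴ * B * a)⁻¹
      = a⁻¹ * ((1 - α) • A⁻¹ + α • B⁻¹) * aᴴ⁻¹ := by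
    simp only [Matrix.mul_inv_rev, mul_add, add_mul, mul_smul_comm, smul_mul_assoc, mul_assoc]
  rw [harmMean, harmMean, hsum, Matrix.mul_inv_rev, Matrix.mul_inv_rev,
    Matrix.nonsing_inv_nonsing_inv _ ha, Matrix.nonsing_inv_nonsing_inv _ haH, mul_assoc]

lemma harmMean_one_left {C : Matrix (Fin n) (Fin n) ℂ} (hC : C.IsHermitian)
    (hC_pos : ∀ x ∈ spectrum ℝ C, 0 < x) {α : ℝ} (hα0 : 0 ≤ α) (hα1 : α ≤ 1) :
    harmMean 1 C α = cfc (fun x => ((1 - α) + α * x⁻¹)⁻¹) C := by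
  have hcont := C.continuousOn_spectrum_real
  have hinv : C⁻¹ = cfc (fun x : ℝ => x⁻¹) C := by
    rw [Matrix.nonsing_inv_eq_ringInverse]
    conv_lhs => rw [← cfc_id' ℝ C hC.isSelfAdjoint]
    exact (cfc_inv (fun x => x) C (fun x hx => (hC_pos x hx).ne') (hcont _) hC).symm
  have hsum : cfc (fun x => (1 - α) + α * x⁻¹) C = (1 - α) • 1 + α • C⁻¹ := by
    refine (cfc_const_add (1 - α) (fun x => α * x⁻¹) C (hcont _) hC.isSelfAdjoint).trans ?_
    rw [cfc_const_mul _ _ C (hcont _), hinv, Algebra.algebraMap_eq_smul_one]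
  rw [harmMean, inv_one, ← hsum, Matrix.nonsing_inv_eq_ringInverse]
  exact (cfc_inv (fun x => (1 - α) + α * x⁻¹) C
    (fun x hx => (one_sub_add_mul_inv_pos (hC_pos x hx) hα0 hα1).ne') (hcont _) hC).symm

theorem harmMean_eq_mpow_half_mul_cfc_mul_mpow_half {A B : Matrix (Fin n) (Fin n) ℂ}
    (hA : A.PosDef) (hB : B.IsHermitian)
    (hpos : ∀ x ∈ spectrum ℝ (mpow A (-(1 / 2)) * B * mpow A (-(1 / 2))), 0 < x)
    {α : ℝ} (hα0 : 0 ≤ α) (hα1 : α ≤ 1) :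
    harmMean A B α = mpow A (1 / 2) * cfc (fun x => ((1 - α) + α * x⁻¹)⁻¹)
      (mpow A (-(1 / 2)) * B * mpow A (-(1 / 2))) * mpow A (1 / 2) := by
  set a := mpow A (1 / 2)
  set b := mpow A (-(1 / 2))
  have ha : aᴴ = a := isHermitian_mpow A _
  have hb : bᴴ = b := isHermitian_mpow A _
  have hab : a * b = 1 := by rw [← mpow_add hA, add_neg_cancel, mpow_zero hA.isHermitian]
  have hba : b * a = 1 := by rw [← mpow_add hA, neg_add_cancel, mpow_zero hA.isHermitian]
  have hA_eq : A = aᴴ * 1 * a := by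
    rw [ha, mul_one, ← mpow_add hA, add_halves, mpow_one hA.isHermitian]
  have hB_eq : B = aᴴ * (b * B * b) * a := by
    simp only [ha, ← mul_assoc, hab, one_mul]
    rw [mul_assoc, hba, mul_one]
  have hC : (b * B * b).IsHermitian := by
    simpa only [hb] using Matrix.isHermitian_conjTranspose_mul_mul b hB
  calc harmMean A B α = harmMean (aᴴ * 1 * a) (aᴴ * (b * B * b) * a) α := by
        rw [← hA_eq, ← hB_eq]
    _ = aᴴ * harmMean 1 (b * B * b) α * a :=
        harmMean_conjTranspose_mul_mul (Matrix.isUnit_det_of_right_inverse hab) _ _ α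
    _ = _ := by rw [harmMean_one_left hC hpos hα0 hα1, ha]

end harmMean

theorem geom_le_harm_general {n : ℕ} (A B : Matrix (Fin n) (Fin n) ℂ) (s t α β : ℝ)
    (hA : A.PosDef) (hB : B.PosDef) (hs : 0 < s)
    (hsA : (B - s • A).PosSemidef) (hBt : (t • A - B).PosSemidef)
    (hα0 : 0 ≤ α) (hα1 : α ≤ 1) :
    (max ((1 - α) * t ^ β + α * t ^ (-(1 - β))) ((1 - α) * s ^ β + α * s ^ (-(1 - β)))
        • harmMean A B α - geomMean A B β).PosSemidef := by
  set μ := max ((1 - α) * t ^ β + α * t ^ (-(1 - β))) ((1 - α) * s ^ β + α * s ^ (-(1 - β)))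
  set a := mpow A (1 / 2)
  set C := mpow A (-(1 / 2)) * B * mpow A (-(1 / 2))
  have hC_spec : spectrum ℝ C ⊆ Icc s t :=
    spectrum_conj_subset_Icc (isHermitian_mpow A _) (mpow_neg_half_mul_mul_mpow_neg_half hA)
      hB.isHermitian hsA hBt
  have hmono : cfc (fun x : ℝ => x ^ β) C ≤ cfc (fun x => μ * ((1 - α) + α * x⁻¹)⁻¹) C :=
    cfc_mono (fun x hx => rpow_le_mul_inv_of_mem_Icc hs (hC_spec hx) hα0 hα1)
      (C.continuousOn_spectrum_real _) (C.continuousOn_spectrum_real _)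
  rw [← Matrix.le_iff]
  calc geomMean A B β = a * cfc (fun x : ℝ => x ^ β) C * a := rfl
    _ ≤ a * cfc (fun x => μ * ((1 - α) + α * x⁻¹)⁻¹) C * a :=
      (isHermitian_mpow A _).isSelfAdjoint.conjugate_le_conjugate hmono
    _ = μ • harmMean A B α := by
      rw [harmMean_eq_mpow_half_mul_cfc_mul_mpow_half hA hB.isHermitian
        (fun x hx => hs.trans_le (hC_spec hx).1) hα0 hα1,
        cfc_const_mul _ _ C (C.continuousOn_spectrum_real _), mul_smul_comm, smul_mul_assoc]

/-- If `0 < sA ≤ B ≤ tA`, then `A ♯_β B ≤ μ (A !_α B)`. -/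
theorem geom_le_harm {n : ℕ} (A B : Matrix (Fin n) (Fin n) ℂ) (s t α β : ℝ)
    (hA : A.PosDef) (hB : B.PosDef) (hs : 0 < s) (hst : s ≤ t)
    (hsA : (B - s • A).PosSemidef) (hBt : (t • A - B).PosSemidef)
    (hα0 : 0 ≤ α) (hα1 : α ≤ 1) (hβ0 : 0 ≤ β) (hβ1 : β ≤ 1) :
    (max ((1 - α) * t ^ β + α * t ^ (-(1 - β))) ((1 - α) * s ^ β + α * s ^ (-(1 - β)))
        • harmMean A B α - geomMean A B β).PosSemidef :=
  geom_le_harm_general A B s t α β hA hB hs hsA hBt hα0 hα1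
end

section
/- If 0 < m ≤ M, A and B are positive invertible operators with mI ≤ A ≤ MI and mI ≤ B ≤ MI, then (1/√K(h))(A ∇ B) ≤ A ♯ B ≤ √K(h) (A ! B), where h = M/m and K(x) = (1+x)²/(4x) is the Kantorovich constant. -/
open scoped ComplexOrder

/-!
Congruence by `A^{1/2}` reduces the three means to functions of the single matrix
`C = A^{-1/2} B A^{-1/2}`: they are `A^{1/2} f(C) A^{1/2}` for `f(x) = (1 + x)/2`, `√x` and
`2x/(1 + x)`. Since `m ≤ A, B ≤ M`, the spectrum of `C` lies in `[1/h, h]`, and there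
`(1 + x)/(2√x) ≤ √K(h)`, the maximum of `(√x + 1/√x)/2` being attained at the endpoints. The
functional calculus and congruence by the self-adjoint `A^{1/2}` preserve the order.
-/

open scoped MatrixOrder
open Set

lemma spectrum_subset_Icc_iff {A : Type*} [TopologicalSpace A] [Ring A] [StarRing A]
    [PartialOrder A] [StarOrderedRing A] [Algebra ℝ A]
    [ContinuousFunctionalCalculus ℝ A IsSelfAdjoint] [NonnegSpectrumClass ℝ A]
    {a : A} (ha : IsSelfAdjoint a) {r s : ℝ} :
    spectrum ℝ a ⊆ Icc r s ↔ algebraMap ℝ A r ≤ a ∧ a ≤ algebraMap ℝ A s := by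
  rw [algebraMap_le_iff_le_spectrum, le_algebraMap_iff_spectrum_le]
  exact ⟨fun h => ⟨fun x hx => (h hx).1, fun x hx => (h hx).2⟩,
    fun h x hx => ⟨h.1 x hx, h.2 x hx⟩⟩

lemma smul_conjugate_cfc {A : Type*} [TopologicalSpace A] [Ring A] [StarRing A] [Algebra ℝ A]
    [ContinuousFunctionalCalculus ℝ A IsSelfAdjoint] (c : ℝ) (S a : A) (f : ℝ → ℝ)
    (hf : ContinuousOn f (spectrum ℝ a)) :
    c • (S * cfc f a * S) = S * cfc (fun x => c * f x) a * S := by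
  rw [cfc_const_mul c f a hf, mul_smul_comm, smul_mul_assoc]

lemma Matrix.continuousOn_spectrum {ι 𝕜 : Type*} [Fintype ι] [DecidableEq ι] [RCLike 𝕜]
    (f : ℝ → ℝ) (A : Matrix ι ι 𝕜) : ContinuousOn f (spectrum ℝ A) :=
  A.finite_real_spectrum.continuousOn f

lemma Matrix.spectrum_subset_Icc {ι 𝕜 : Type*} [Fintype ι] [DecidableEq ι] [RCLike 𝕜]
    {A : Matrix ι ι 𝕜} (hA : IsSelfAdjoint A) {m M : ℝ}
    (hAm : (A - m • (1 : Matrix ι ι 𝕜)).PosSemidef)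
    (hAM : (M • (1 : Matrix ι ι 𝕜) - A).PosSemidef) : spectrum ℝ A ⊆ Icc m M :=
  (spectrum_subset_Icc_iff hA).mpr <| by
    simp only [Algebra.algebraMap_eq_smul_one]
    exact ⟨hAm, hAM⟩

section mpow

variable {n : ℕ}

lemma isSelfAdjoint_mpow (A : Matrix (Fin n) (Fin n) ℂ) (r : ℝ) : IsSelfAdjoint (mpow A r) :=
  cfc_predicate _ A

lemma mpow_zero_s6 {A : Matrix (Fin n) (Fin n) ℂ} (hA : IsSelfAdjoint A) : mpow A 0 = 1 := by
  simp only [mpow, Real.rpow_zero]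
  exact cfc_const_one ℝ A

lemma mpow_one_s6 {A : Matrix (Fin n) (Fin n) ℂ} (hA : IsSelfAdjoint A) : mpow A 1 = A := by
  simp only [mpow, Real.rpow_one]
  exact cfc_id' ℝ A

lemma mpow_mul_mpow {A : Matrix (Fin n) (Fin n) ℂ} (hA : ∀ x ∈ spectrum ℝ A, 0 < x) (r s : ℝ) :
    mpow A r * mpow A s = mpow A (r + s) := by
  rw [mpow, mpow, mpow, ← cfc_mul _ _ A (Matrix.continuousOn_spectrum _ _)
    (Matrix.continuousOn_spectrum _ _)]
  exact cfc_congr fun x hx => (Real.rpow_add (hA x hx) r s).symm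

lemma mpow_neg_half_conj_spectrum_subset {A B : Matrix (Fin n) (Fin n) ℂ} {a b c d : ℝ}
    (hAsa : IsSelfAdjoint A) (ha : 0 < a) (hA : spectrum ℝ A ⊆ Icc a b)
    (hBsa : IsSelfAdjoint B) (hc : 0 ≤ c) (hd : 0 ≤ d) (hB : spectrum ℝ B ⊆ Icc c d) :
    spectrum ℝ (mpow A (-(1/2)) * B * mpow A (-(1/2))) ⊆ Icc (c / b) (d / a) := by
  set T := mpow A (-(1/2))
  have hT : IsSelfAdjoint T := isSelfAdjoint_mpow A _
  have hApos : ∀ x ∈ spectrum ℝ A, 0 < x := fun x hx => ha.trans_le (hA hx).1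
  have hT_conj_scalar (r : ℝ) : T * algebraMap ℝ _ r * T = cfc (fun x => r * x ^ (-1 : ℝ)) A := by
    rw [Algebra.algebraMap_eq_smul_one, mul_smul_comm, mul_one, smul_mul_assoc,
      mpow_mul_mpow hApos, cfc_const_mul _ _ _ (Matrix.continuousOn_spectrum _ _)]
    norm_num [mpow]
  obtain ⟨hcB, hBd⟩ := (spectrum_subset_Icc_iff hBsa).mp hB
  refine (spectrum_subset_Icc_iff (hBsa.conjugate_self hT)).mpr ⟨?_, ?_⟩
  · refine le_trans ?_ (hT.conjugate_le_conjugate hcB)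
    rw [hT_conj_scalar]
    refine algebraMap_le_cfc _ _ _ (fun x hx => ?_) (Matrix.continuousOn_spectrum _ _)
    rw [Real.rpow_neg_one, ← div_eq_mul_inv]
    exact div_le_div_of_nonneg_left hc (hApos x hx) (hA hx).2
  · refine le_trans (hT.conjugate_le_conjugate hBd) ?_
    rw [hT_conj_scalar]
    refine cfc_le_algebraMap _ _ _ (fun x hx => ?_) (Matrix.continuousOn_spectrum _ _)
    rw [Real.rpow_neg_one, ← div_eq_mul_inv]
    exact div_le_div_of_nonneg_left hd ha (hA hx).1

section Congruence

variable {A B : Matrix (Fin n) (Fin n) ℂ} (hAsa : IsSelfAdjoint A)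
  (hA : ∀ x ∈ spectrum ℝ A, 0 < x)
include hAsa hA

lemma mpow_mul_mpow_neg (r : ℝ) : mpow A r * mpow A (-r) = 1 := by
  rw [mpow_mul_mpow hA, add_neg_cancel, mpow_zero_s6 hAsa]

lemma mpow_neg_mul_mpow (r : ℝ) : mpow A (-r) * mpow A r = 1 := by
  rw [mpow_mul_mpow hA, neg_add_cancel, mpow_zero_s6 hAsa]

lemma mpow_half_mul_mpow_half : mpow A (1/2) * mpow A (1/2) = A := by
  rw [mpow_mul_mpow hA]
  norm_num [mpow_one_s6 hAsa]

lemma mpow_half_conj_mpow_neg_half_conj :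
    mpow A (1/2) * (mpow A (-(1/2)) * B * mpow A (-(1/2))) * mpow A (1/2) = B := by
  simp only [← mul_assoc, mpow_mul_mpow_neg hAsa hA, one_mul]
  rw [mul_assoc, mpow_neg_mul_mpow hAsa hA, mul_one]

lemma smul_add_smul_eq_mpow_half_conj_cfc (hBsa : IsSelfAdjoint B) (a b : ℝ) :
    a • A + b • B = mpow A (1/2) *
      cfc (fun x => a + b * x) (mpow A (-(1/2)) * B * mpow A (-(1/2))) * mpow A (1/2) := by
  have hC : IsSelfAdjoint (mpow A (-(1/2)) * B * mpow A (-(1/2))) :=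
    hBsa.conjugate_self (isSelfAdjoint_mpow A _)
  rw [cfc_const_add _ _ _ (Matrix.continuousOn_spectrum _ _),
    cfc_const_mul _ _ _ (Matrix.continuousOn_spectrum _ _), cfc_id' ℝ _,
    Algebra.algebraMap_eq_smul_one]
  simp only [mul_add, add_mul, mul_smul_comm, smul_mul_assoc, mul_one]
  rw [mpow_half_mul_mpow_half hAsa hA, mpow_half_conj_mpow_neg_half_conj hAsa hA]

lemma harmMean_eq_mpow_half_conj_cfc (hBsa : IsSelfAdjoint B)
    (hC : ∀ x ∈ spectrum ℝ (mpow A (-(1/2)) * B * mpow A (-(1/2))), 0 < x)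
    {α : ℝ} (hα₀ : 0 ≤ α) (hα₁ : α ≤ 1) :
    harmMean A B α = mpow A (1/2) *
      cfc (fun x => ((1 - α) + α * x⁻¹)⁻¹) (mpow A (-(1/2)) * B * mpow A (-(1/2))) *
        mpow A (1/2) := by
  set S := mpow A (1/2)
  set T := mpow A (-(1/2))
  set C := T * B * T
  have hCsa : IsSelfAdjoint C := hBsa.conjugate_self (isSelfAdjoint_mpow A _)
  have hS_inv : S⁻¹ = T := Matrix.inv_eq_right_inv (mpow_mul_mpow_neg hAsa hA _)
  have hT_inv : T⁻¹ = S := Matrix.inv_eq_right_inv (mpow_neg_mul_mpow hAsa hA _)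
  have hA_inv : A⁻¹ = T * T := by
    rw [← mpow_half_mul_mpow_half hAsa hA, Matrix.mul_inv_rev, hS_inv]
  have hB_inv : B⁻¹ = T * cfc (·⁻¹ : ℝ → ℝ) C * T := by
    have hCunit : IsUnit C := spectrum.isUnit_of_zero_notMem ℝ fun h0 => (hC 0 h0).false
    rw [cfc_ringInverse_id C hCunit, ← Matrix.nonsing_inv_eq_ringInverse]
    conv_lhs => rw [← mpow_half_conj_mpow_neg_half_conj (B := B) hAsa hA]
    rw [Matrix.mul_inv_rev, Matrix.mul_inv_rev, hS_inv, ← mul_assoc]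
  have hsum : (1 - α) • A⁻¹ + α • B⁻¹ = T * cfc (fun x => (1 - α) + α * x⁻¹) C * T := by
    rw [cfc_const_add _ _ _ (Matrix.continuousOn_spectrum _ _),
      cfc_const_mul _ _ _ (Matrix.continuousOn_spectrum _ _), Algebra.algebraMap_eq_smul_one,
      hA_inv, hB_inv]
    simp only [mul_add, add_mul, mul_smul_comm, smul_mul_assoc, mul_one]
  have hsum_ne : ∀ x ∈ spectrum ℝ C, (1 - α) + α * x⁻¹ ≠ 0 := fun x hx => by
    have hx := inv_pos.mpr (hC x hx)
    have : 0 < 1 - α + α * x⁻¹ := by nlinarith [mul_nonneg hα₀ (sq_nonneg x⁻¹)]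
    exact this.ne'
  rw [harmMean, hsum, Matrix.mul_inv_rev, Matrix.mul_inv_rev, hT_inv,
    Matrix.nonsing_inv_eq_ringInverse (cfc _ C),
    ← cfc_inv _ C hsum_ne (Matrix.continuousOn_spectrum _ _), mul_assoc]

end Congruence

end mpow

noncomputable def kantorovich (h : ℝ) : ℝ := (1 + h) ^ 2 / (4 * h)

lemma sqrt_kantorovich {h : ℝ} (hh : 0 < h) : √(kantorovich h) = (1 + h) / (2 * √h) := by
  rw [kantorovich, show (1 + h) ^ 2 / (4 * h) = ((1 + h) / (2 * √h)) ^ 2 by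
    rw [div_pow, mul_pow, Real.sq_sqrt hh.le]; norm_num]
  exact Real.sqrt_sq (by positivity)

lemma one_add_le_two_mul_sqrt_kantorovich_mul_sqrt {h x : ℝ} (hh : 0 < h) (hx₁ : h⁻¹ ≤ x)
    (hx₂ : x ≤ h) : 1 + x ≤ 2 * √(kantorovich h) * √x := by
  have hx : 0 < x := (inv_pos.mpr hh).trans_le hx₁
  have hs : 0 < √h := Real.sqrt_pos.mpr hh
  have hts : √x ≤ √h := Real.sqrt_le_sqrt hx₂
  have hst : 1 ≤ √h * √x := by
    rw [← Real.sqrt_mul hh.le, Real.one_le_sqrt]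
    exact (inv_le_iff_one_le_mul₀' hh).mp hx₁
  rw [sqrt_kantorovich hh, show 2 * ((1 + h) / (2 * √h)) * √x = (1 + h) * √x / √h by field_simp,
    le_div_iff₀ hs]
  nlinarith [mul_nonneg (sub_nonneg.mpr hts) (sub_nonneg.mpr hst), Real.sq_sqrt hh.le,
    Real.sq_sqrt hx.le]

lemma kantorovich_mean_sandwich {h x : ℝ} (hh : 0 < h) (hx₁ : h⁻¹ ≤ x) (hx₂ : x ≤ h) :
    (√(kantorovich h))⁻¹ * (1/2 + 1/2 * x) ≤ x ^ (1/2 : ℝ) ∧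
      x ^ (1/2 : ℝ) ≤ √(kantorovich h) * (1/2 + 1/2 * x⁻¹)⁻¹ := by
  have hx : 0 < x := (inv_pos.mpr hh).trans_le hx₁
  have hk : 0 < √(kantorovich h) := Real.sqrt_pos.mpr (by unfold kantorovich; positivity)
  have key := one_add_le_two_mul_sqrt_kantorovich_mul_sqrt hh hx₁ hx₂
  rw [← Real.sqrt_eq_rpow]
  constructor
  · rw [inv_mul_le_iff₀ hk]
    linarith
  · rw [show (1/2 + 1/2 * x⁻¹)⁻¹ = 2 * x / (1 + x) by field_simp; ring, mul_div_assoc',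
      le_div_iff₀ (by positivity)]
    nlinarith [mul_le_mul_of_nonneg_left key (Real.sqrt_nonneg x), Real.sq_sqrt hx.le]

/-- Kantorovich-constant sandwich: `(1/√K(h))(A ∇ B) ≤ A ♯ B ≤ √K(h)(A ! B)` for
`mI ≤ A, B ≤ MI`, `h = M/m`, `K(x) = (1+x)²/(4x)`. -/
theorem kantorovich_sandwich {n : ℕ} (A B : Matrix (Fin n) (Fin n) ℂ) (m M : ℝ)
    (hA : A.PosDef) (hB : B.PosDef) (hm : 0 < m) (hmM : m ≤ M)
    (hAm : (A - m • (1 : Matrix (Fin n) (Fin n) ℂ)).PosSemidef)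
    (hAM : (M • (1 : Matrix (Fin n) (Fin n) ℂ) - A).PosSemidef)
    (hBm : (B - m • (1 : Matrix (Fin n) (Fin n) ℂ)).PosSemidef)
    (hBM : (M • (1 : Matrix (Fin n) (Fin n) ℂ) - B).PosSemidef) :
    (geomMean A B (1/2) -
        (Real.sqrt ((1 + M / m) ^ 2 / (4 * (M / m))))⁻¹
          • ((1/2 : ℝ) • A + (1/2 : ℝ) • B)).PosSemidef ∧
    (Real.sqrt ((1 + M / m) ^ 2 / (4 * (M / m)))
        • harmMean A B (1/2) - geomMean A B (1/2)).PosSemidef := by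
  have hM : 0 < M := hm.trans_le hmM
  have hAsa : IsSelfAdjoint A := hA.isHermitian
  have hBsa : IsSelfAdjoint B := hB.isHermitian
  have hAspec := Matrix.spectrum_subset_Icc hAsa hAm hAM
  have hApos : ∀ x ∈ spectrum ℝ A, 0 < x := fun x hx => hm.trans_le (hAspec hx).1
  set C := mpow A (-(1/2)) * B * mpow A (-(1/2))
  have hCspec : spectrum ℝ C ⊆ Icc (M / m)⁻¹ (M / m) := by
    rw [inv_div]
    exact mpow_neg_half_conj_spectrum_subset hAsa hm hAspec hBsa hm.le hM.le
      (Matrix.spectrum_subset_Icc hBsa hBm hBM)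
  have hCpos : ∀ x ∈ spectrum ℝ C, 0 < x := fun x hx =>
    (inv_pos.mpr (div_pos hM hm)).trans_le (hCspec hx).1
  have hsandwich := fun x (hx : x ∈ spectrum ℝ C) =>
    kantorovich_mean_sandwich (div_pos hM hm) (hCspec hx).1 (hCspec hx).2
  have hS := isSelfAdjoint_mpow A (1/2)
  rw [← Matrix.le_iff, ← Matrix.le_iff, smul_add_smul_eq_mpow_half_conj_cfc hAsa hApos hBsa,
    harmMean_eq_mpow_half_conj_cfc hAsa hApos hBsa hCpos (by norm_num) (by norm_num),
    show (1 : ℝ) - 1/2 = 1/2 by norm_num, geomMean,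
    smul_conjugate_cfc _ _ _ _ (Matrix.continuousOn_spectrum _ _),
    smul_conjugate_cfc _ _ _ _ (Matrix.continuousOn_spectrum _ _)]
  exact ⟨hS.conjugate_le_conjugate <| cfc_mono (fun x hx => (hsandwich x hx).1)
      (Matrix.continuousOn_spectrum _ _) (Matrix.continuousOn_spectrum _ _),
    hS.conjugate_le_conjugate <| cfc_mono (fun x hx => (hsandwich x hx).2)
      (Matrix.continuousOn_spectrum _ _) (Matrix.continuousOn_spectrum _ _)⟩
end
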